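/- arXiv:2204.08162 — 2 statements merged into one kernel-verified Lean document; each statement's English description precedes it below -/
import Mathlib

section
/- Let f : G → ℂ be a continuous positive definite function on a locally compact abelian group G with f(0) = 1. Then the set G₁ = {x ∈ G : |f(x)| = 1} is a closed subgroup of G, and the restriction of f to G₁ is a character (i.e., f(x+y) = f(x)f(y) for x, y ∈ G₁). -/
/-!
Positive semi-definiteness of the Gram matrix `[f (xᵢ - xⱼ)]` at the points `0, x` forces
`f (-x) = conj (f x)`. At the points `0, x, y` with `|f y| = 1`, the quadratic form evaluated at
`(conj (f y), -conj β, -1)`, where `β = f y * conj (f x) - f (y - x)`, equals `-|β|²`; hence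
`β = 0`. Replacing `x` by `-x` gives `f (y + x) = f y * f x`, which makes `{|f| = 1}` closed under
addition, and it is closed as a level set of the continuous function `|f|`.
-/

open Complex ComplexConjugate
open scoped ComplexOrder

def IsPositiveDefinite {G : Type*} [AddGroup G] (f : G → ℂ) : Prop :=
  ∀ (n : ℕ) (x : Fin n → G) (c : Fin n → ℂ), 0 ≤ ∑ i, ∑ j, conj (c i) * c j * f (x i - x j)

namespace IsPositiveDefinite

variable {G : Type*} [AddGroup G] {f : G → ℂ}

theorem apply_zero_nonneg (hf : IsPositiveDefinite f) : 0 ≤ f 0 := by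
  simpa using hf 1 ![0] ![1]

theorem map_neg (hf : IsPositiveDefinite f) (x : G) : f (-x) = conj (f x) := by
  have h1 := hf 2 ![0, x] ![1, 1]
  have h2 := hf 2 ![0, x] ![1, I]
  have h0 := (Complex.le_def.mp hf.apply_zero_nonneg).2
  simp only [Fin.sum_univ_two, Matrix.cons_val_zero, Matrix.cons_val_one, sub_self, zero_sub,
    sub_zero, map_one, one_mul, mul_one, conj_I] at h1 h2
  obtain ⟨-, h1⟩ := Complex.le_def.mp h1
  obtain ⟨-, h2⟩ := Complex.le_def.mp h2
  simp only [Complex.ext_iff, add_im, mul_im, mul_re, neg_re, neg_im, I_re, I_im,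
    conj_re, conj_im, zero_im] at h0 h1 h2 ⊢
  constructor <;> linarith

theorem map_sub_of_norm_eq_one (hf : IsPositiveDefinite f) (hf0 : f 0 = 1) {y : G}
    (hy : ‖f y‖ = 1) (x : G) : f (y - x) = f y * conj (f x) := by
  set β : ℂ := f y * conj (f x) - f (y - x)
  have hy' : f y * conj (f y) = 1 := by
    rw [mul_conj, normSq_eq_norm_sq, hy]; norm_num
  have h := hf 3 ![0, x, y] ![conj (f y), -conj β, -1]
  simp only [Fin.sum_univ_three, Matrix.cons_val_zero, Matrix.cons_val_one, Matrix.cons_val_two,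
    Matrix.head_cons, Matrix.tail_cons] at h
  rw [← neg_sub y x] at h
  simp only [sub_self, sub_zero, zero_sub, hf.map_neg, hf0] at h
  have hform : (0 : ℂ) ≤ -(β * conj β) := by
    convert h using 1
    simp only [β, _root_.map_neg, map_sub, map_mul, conj_conj, map_one]
    linear_combination hy'
  rw [mul_conj, ← ofReal_neg, zero_le_real, neg_nonneg] at hform
  have hβ : β = 0 := normSq_eq_zero.mp (le_antisymm hform (normSq_nonneg β))
  exact (sub_eq_zero.mp hβ).symm

theorem map_add_of_norm_eq_one (hf : IsPositiveDefinite f) (hf0 : f 0 = 1) {x : G}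
    (hx : ‖f x‖ = 1) (y : G) : f (x + y) = f x * f y := by
  simpa [sub_neg_eq_add, hf.map_neg] using hf.map_sub_of_norm_eq_one hf0 hx (-y)

def normEqOneAddSubgroup (hf : IsPositiveDefinite f) (hf0 : f 0 = 1) : AddSubgroup G where
  carrier := {x | ‖f x‖ = 1}
  zero_mem' := by simp [hf0]
  add_mem' {x y} (hx : ‖f x‖ = 1) (hy : ‖f y‖ = 1) := by
    show ‖f (x + y)‖ = 1
    rw [hf.map_add_of_norm_eq_one hf0 hx, norm_mul, hx, hy, one_mul]
  neg_mem' {x} (hx : ‖f x‖ = 1) := by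
    show ‖f (-x)‖ = 1
    rwa [hf.map_neg, norm_conj]

end IsPositiveDefinite

theorem stmt3_general {G : Type*} [AddCommGroup G] [TopologicalSpace G]
    (f : G → ℂ) (hfcont : Continuous f) (hf0 : f 0 = 1)
    (hfpd : ∀ (n : ℕ) (x : Fin n → G) (c : Fin n → ℂ),
      0 ≤ ∑ i, ∑ j, conj (c i) * c j * f (x i - x j)) :
    ∃ H : AddSubgroup G, (H : Set G) = {x : G | ‖f x‖ = 1} ∧
      IsClosed (H : Set G) ∧
      ∀ x ∈ H, ∀ y ∈ H, f (x + y) = f x * f y := by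
  have hf : IsPositiveDefinite f := hfpd
  refine ⟨hf.normEqOneAddSubgroup hf0, rfl, ?_, fun x hx y _ => hf.map_add_of_norm_eq_one hf0 hx y⟩
  exact isClosed_eq (continuous_norm.comp hfcont) continuous_const

theorem stmt3 {G : Type*} [AddCommGroup G] [TopologicalSpace G] [IsTopologicalAddGroup G]
    [LocallyCompactSpace G] [T2Space G]
    (f : G → ℂ) (hfcont : Continuous f) (hf0 : f 0 = 1)
    (hfpd : ∀ (n : ℕ) (x : Fin n → G) (c : Fin n → ℂ),
      0 ≤ ∑ i, ∑ j, conj (c i) * c j * f (x i - x j)) :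
    ∃ H : AddSubgroup G, (H : Set G) = {x : G | ‖f x‖ = 1} ∧
      IsClosed (H : Set G) ∧
      ∀ x ∈ H, ∀ y ∈ H, f (x + y) = f x * f y :=
  stmt3_general f hfcont hf0 hfpd
end

section
/- Let H be a compact subgroup of ℚₚⁿ that is also open. Then H is a free ℤₚ-module of rank n, i.e., there exist ℤₚ-linearly independent elements z₁,...,zₙ ∈ ℚₚⁿ such that H = ℤₚz₁ ⊕ ⋯ ⊕ ℤₚzₙ (H is a lattice). -/
/-!
Being closed, `H` is stable under `ℤ` and hence, by density of `ℤ` in `ℤ_[p]`, under `ℤ_[p]`.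
Being open it contains some `p ^ k ℤ_[p] ^ n`, and being compact, hence bounded, it lies in some
`p ^ l ℤ_[p] ^ n`. So `H` is a finitely generated torsion-free module over the PID `ℤ_[p]`, hence
free, and its rank is squeezed between those of the two lattices, both equal to `n`.
-/

open Module Submodule Topology

namespace PadicInt

variable {p : ℕ} [Fact p.Prime]

instance : ContinuousSMul ℤ_[p] ℚ_[p] :=
  ⟨(continuous_subtype_val.comp continuous_fst).mul continuous_snd⟩

theorem smul_mem_of_isClosed {E : Type*} [AddCommGroup E] [Module ℤ_[p] E] [TopologicalSpace E]
    [ContinuousSMul ℤ_[p] E] {H : AddSubgroup E} (hH : IsClosed (H : Set E)) (c : ℤ_[p])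
    {x : E} (hx : x ∈ H) : c • x ∈ H := by
  have hclosed : IsClosed {c : ℤ_[p] | c • x ∈ H} :=
    hH.preimage (continuous_id.smul continuous_const)
  have hint : Set.range ((↑) : ℤ → ℤ_[p]) ⊆ {c : ℤ_[p] | c • x ∈ H} := by
    rintro _ ⟨m, rfl⟩
    simpa only [Set.mem_ofPred_eq, Int.cast_smul_eq_zsmul] using H.zsmul_mem hx m
  exact hclosed.closure_subset_iff.mpr hint (denseRange_intCast c)

variable (p) in
def _root_.AddSubgroup.toPadicIntSubmodule {E : Type*} [AddCommGroup E] [Module ℤ_[p] E]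
    [TopologicalSpace E] [ContinuousSMul ℤ_[p] E] (H : AddSubgroup E)
    (hH : IsClosed (H : Set E)) : Submodule ℤ_[p] E :=
  { H with smul_mem' := fun c _ hx ↦ smul_mem_of_isClosed hH c hx }

variable (p) (ι : Type*) [Fintype ι] [DecidableEq ι]

/-- The lattice `p ^ k ℤ_[p] ^ ι`. -/
noncomputable def lattice (k : ℤ) : Submodule ℤ_[p] (ι → ℚ_[p]) :=
  span ℤ_[p] (Set.range fun i : ι ↦ Pi.single i ((p : ℚ_[p]) ^ k))

instance (k : ℤ) : Module.Finite ℤ_[p] (lattice p ι k) :=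
  .span_of_finite _ (Set.finite_range _)

variable {p ι}

theorem linearIndependent_single_zpow (k : ℤ) :
    LinearIndependent ℤ_[p] fun i : ι ↦ Pi.single i ((p : ℚ_[p]) ^ k) := by
  refine (LinearIndependent.iff_fractionRing ℤ_[p] ℚ_[p]).mpr ?_
  have hp : (p : ℚ_[p]) ^ k ≠ 0 :=
    zpow_ne_zero _ (Nat.cast_ne_zero.mpr (Fact.out : p.Prime).ne_zero)
  have h : (fun i : ι ↦ (Pi.single i ((p : ℚ_[p]) ^ k) : ι → ℚ_[p])) =
      (fun _ : ι ↦ Units.mk0 _ hp) • ⇑(Pi.basisFun ℚ_[p] ι) := by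
    ext i j
    simp [Pi.single_apply]
  rw [h]
  exact (Pi.basisFun ℚ_[p] ι).linearIndependent.units_smul _

theorem finrank_lattice (k : ℤ) : finrank ℤ_[p] (lattice p ι k) = Fintype.card ι :=
  finrank_span_eq_card (linearIndependent_single_zpow k)

theorem mem_lattice_of_norm_le {k : ℤ} {x : ι → ℚ_[p]} (hx : ∀ i, ‖x i‖ ≤ (p : ℝ) ^ (-k)) :
    x ∈ lattice p ι k := by
  have hp : (p : ℚ_[p]) ≠ 0 := Nat.cast_ne_zero.mpr (Fact.out : p.Prime).ne_zero
  have hpk : (0 : ℝ) < (p : ℝ) ^ k := zpow_pos (Nat.cast_pos.mpr (Fact.out : p.Prime).pos) k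
  have hcoeff (i : ι) : ‖x i * (p : ℚ_[p]) ^ (-k)‖ ≤ 1 := by
    rw [norm_mul, Padic.norm_p_zpow, neg_neg, ← le_div_iff₀ hpk, one_div, ← zpow_neg]
    exact hx i
  let a (i : ι) : ℤ_[p] := ⟨_, hcoeff i⟩
  have hx : x = ∑ i, a i • (Pi.single i ((p : ℚ_[p]) ^ k) : ι → ℚ_[p]) := by
    ext j
    simp only [Finset.sum_apply, Pi.smul_apply, Pi.single_apply, smul_ite, smul_zero,
      Finset.sum_ite_eq, Finset.mem_univ, if_true]
    change x j = x j * (p : ℚ_[p]) ^ (-k) * (p : ℚ_[p]) ^ k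
    rw [mul_assoc, ← zpow_add₀ hp, neg_add_cancel, zpow_zero, mul_one]
  rw [hx]
  exact sum_mem fun i _ ↦ smul_mem _ _ (subset_span ⟨i, rfl⟩)

theorem lattice_le_of_mem_nhds {M : Submodule ℤ_[p] (ι → ℚ_[p])}
    (hM : (M : Set (ι → ℚ_[p])) ∈ 𝓝 0) : ∃ k : ℤ, lattice p ι k ≤ M := by
  obtain ⟨ε, hε, hball⟩ := Metric.mem_nhds_iff.mp hM
  have hp : (1 : ℝ) < p := by exact_mod_cast (Fact.out : p.Prime).one_lt
  obtain ⟨k, hk⟩ := exists_pow_lt_of_lt_one hε (inv_lt_one_of_one_lt₀ hp)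
  refine ⟨k, span_le.mpr ?_⟩
  rintro _ ⟨i, rfl⟩
  apply hball
  rw [Metric.mem_ball, dist_zero_right, Pi.norm_single, Padic.norm_p_zpow, zpow_neg, zpow_natCast,
    ← inv_pow]
  exact hk

theorem exists_le_lattice_of_isBounded {M : Submodule ℤ_[p] (ι → ℚ_[p])}
    (hM : Bornology.IsBounded (M : Set (ι → ℚ_[p]))) : ∃ k : ℤ, M ≤ lattice p ι k := by
  obtain ⟨C, hC⟩ := hM.exists_norm_le
  have hp : (1 : ℝ) < p := by exact_mod_cast (Fact.out : p.Prime).one_lt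
  obtain ⟨m, hm⟩ := pow_unbounded_of_one_lt C hp
  refine ⟨-m, fun x hx ↦ mem_lattice_of_norm_le fun i ↦ ?_⟩
  rw [neg_neg, zpow_natCast]
  exact (norm_le_pi_norm x i).trans ((hC x hx).trans hm.le)

theorem nonempty_basis_of_lattice_le_of_le_lattice {M : Submodule ℤ_[p] (ι → ℚ_[p])} {k l : ℤ}
    (hlo : lattice p ι k ≤ M) (hhi : M ≤ lattice p ι l) : Nonempty (Basis ι ℤ_[p] M) := by
  have : Module.Finite ℤ_[p] M := Module.Finite.iff_fg.mpr (FG.of_le_of_isNoetherian hhi)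
  have hrank : finrank ℤ_[p] M = Fintype.card ι :=
    le_antisymm ((finrank_mono hhi).trans_eq (finrank_lattice l))
      ((finrank_lattice k).symm.trans_le (finrank_mono hlo))
  exact ⟨(finBasisOfFinrankEq _ _ hrank).reindex (Fintype.equivFin ι).symm⟩

theorem exists_linearIndependent_span_eq_of_isCompact_of_isOpen
    {H : AddSubgroup (ι → ℚ_[p])} (hc : IsCompact (H : Set (ι → ℚ_[p])))
    (ho : IsOpen (H : Set (ι → ℚ_[p]))) :
    ∃ z : ι → ι → ℚ_[p], LinearIndependent ℤ_[p] z ∧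
      (H : Set (ι → ℚ_[p])) = span ℤ_[p] (Set.range z) := by
  set M := H.toPadicIntSubmodule p hc.isClosed
  obtain ⟨k, hlo⟩ := lattice_le_of_mem_nhds (M := M) (ho.mem_nhds H.zero_mem)
  obtain ⟨l, hhi⟩ := exists_le_lattice_of_isBounded (M := M) hc.isBounded
  obtain ⟨b⟩ := nonempty_basis_of_lattice_le_of_le_lattice hlo hhi
  refine ⟨M.subtype ∘ b, b.linearIndependent.map' _ M.ker_subtype, ?_⟩
  rw [Set.range_comp, span_image, b.span_eq, map_subtype_top]
  rfl

end PadicInt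

theorem stmt9 (p : ℕ) [Fact p.Prime] (n : ℕ)
    (H : AddSubgroup (Fin n → ℚ_[p]))
    (hKc : IsCompact (H : Set (Fin n → ℚ_[p])))
    (hKo : IsOpen (H : Set (Fin n → ℚ_[p]))) :
    ∃ z : Fin n → (Fin n → ℚ_[p]), LinearIndependent ℤ_[p] z ∧
      (H : Set (Fin n → ℚ_[p])) = (Submodule.span ℤ_[p] (Set.range z) : Set (Fin n → ℚ_[p])) :=
  PadicInt.exists_linearIndependent_span_eq_of_isCompact_of_isOpen hKc hKo
end
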